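/- arXiv:math/0312327 — 6 statements merged into one kernel-verified Lean document; each statement's English description precedes it below -/
import Mathlib

section
/- Fix positive integers k, r with r ≥ 2, let m = gcd(k+1, r−1), let ω₁ be a complex number with ω₁^{(r−1)/m} a primitive m-th root of unity, and let u be transcendental over ℚ(ω₁). Set t = u^{(r−1)/m} and q = ω₁·u^{−(k+1)/m} (as elements of the field ℂ(u^{1/m}) or an appropriate extension). Then for integers x, y, we have t^x q^y = 1 if and only if there exists l ∈ ℤ with x = (k+1)l and y = (r−1)l. -/
theorem stmt_2 (k r : ℕ) (hk : 1 ≤ k) (hr : 2 ≤ r) {F : Type*} [Field F]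
    (u ω₁ : F) (hu0 : u ≠ 0)
    (m : ℕ) (hm : m = Nat.gcd (k + 1) (r - 1))
    (hω : IsPrimitiveRoot (ω₁ ^ ((r - 1) / m)) m)
    (hgen : ∀ (a j : ℤ), u ^ a * ω₁ ^ j = 1 → a = 0 ∧ ω₁ ^ j = 1)
    (t q : F) (ht : t = u ^ (((r - 1) / m : ℕ) : ℤ))
    (hq : q = ω₁ * u ^ (-(((k + 1) / m : ℕ) : ℤ))) :
    ∀ x y : ℤ, t ^ x * q ^ y = 1 ↔ ∃ l : ℤ, x = (k + 1) * l ∧ y = (r - 1) * l := by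
  intro x y
  set A : ℕ := (r - 1) / m with hA
  set B : ℕ := (k + 1) / m with hB
  have hm0 : 0 < m := by
    rw [hm]; exact Nat.gcd_pos_of_pos_left _ (Nat.succ_pos k)
  have hdk : m ∣ k + 1 := hm ▸ Nat.gcd_dvd_left _ _
  have hdr : m ∣ r - 1 := hm ▸ Nat.gcd_dvd_right _ _
  have hmA : m * A = r - 1 := Nat.mul_div_cancel' hdr
  have hmB : m * B = k + 1 := Nat.mul_div_cancel' hdk
  have hA0 : 0 < A := Nat.div_pos (Nat.le_of_dvd (by omega) hdr) hm0
  have hB0 : 0 < B := Nat.div_pos (Nat.le_of_dvd (by omega) hdk) hm0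
  have hω0 : ω₁ ≠ 0 := by
    intro h
    have h1 := hω.pow_eq_one
    rw [h, zero_pow hA0.ne', zero_pow hm0.ne'] at h1
    exact zero_ne_one h1
  have hcop : IsCoprime (A : ℤ) (B : ℤ) := by
    rw [Int.isCoprime_iff_gcd_eq_one, Int.gcd_natCast_natCast]
    have h2 := (Nat.coprime_div_gcd_div_gcd (hm ▸ hm0)).symm
    rw [← hm] at h2
    exact h2
  -- main rewriting
  have key : t ^ x * q ^ y = u ^ ((A : ℤ) * x - (B : ℤ) * y) * ω₁ ^ y := by
    rw [ht, hq, ← zpow_mul, mul_zpow, ← zpow_mul, sub_eq_add_neg,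
      zpow_add₀ hu0, neg_mul, ← neg_mul]
    ring
  rw [key]
  constructor
  · intro h
    obtain ⟨hc, hωy⟩ := hgen _ _ h
    have hAxBy : (A : ℤ) * x = (B : ℤ) * y := by omega
    have hAy : (A : ℤ) ∣ y := hcop.dvd_of_dvd_mul_left ⟨x, hAxBy.symm⟩
    obtain ⟨l, hl⟩ := hAy
    have hx : x = (B : ℤ) * l := by
      have hAne : (A : ℤ) ≠ 0 := by exact_mod_cast hA0.ne'
      apply mul_left_cancel₀ hAne
      rw [hAxBy, hl]; ring
    have hml : (m : ℤ) ∣ l := by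
      rw [← hω.zpow_eq_one_iff_dvd]
      rw [hl, zpow_mul, zpow_natCast] at hωy
      exact hωy
    obtain ⟨l', hl'⟩ := hml
    refine ⟨l', ?_, ?_⟩
    · rw [hx, hl']
      have : ((m : ℤ) * B) = (k : ℤ) + 1 := by exact_mod_cast congrArg (Nat.cast : ℕ → ℤ) hmB
      linear_combination l' * this
    · rw [hl, hl']
      have : ((m : ℤ) * A) = (r : ℤ) - 1 := by
        have := congrArg (Nat.cast : ℕ → ℤ) hmA
        push_cast [Nat.cast_sub (by omega : 1 ≤ r)] at this ⊢
        omega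
      linear_combination l' * this
  · rintro ⟨l, hx, hy⟩
    have hmBz : ((m : ℤ) * B) = (k : ℤ) + 1 := by exact_mod_cast congrArg (Nat.cast : ℕ → ℤ) hmB
    have hmAz : ((m : ℤ) * A) = (r : ℤ) - 1 := by
      have := congrArg (Nat.cast : ℕ → ℤ) hmA
      push_cast [Nat.cast_sub (by omega : 1 ≤ r)] at this
      omega
    have hc : (A : ℤ) * x - (B : ℤ) * y = 0 := by
      rw [hx, hy]
      linear_combination l * (B : ℤ) * hmAz - l * (A : ℤ) * hmBz
    have hωy : ω₁ ^ y = 1 := by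
      rw [hy, ← hmAz, show (m : ℤ) * A * l = (A : ℤ) * ((m : ℤ) * l) by ring,
        zpow_mul, zpow_natCast, zpow_mul, zpow_natCast, hω.pow_eq_one, one_zpow]
    rw [hc, hωy, zpow_zero, one_mul]
end

section
/- Let k ≥ 1, r ≥ 2, n ≥ k+1 be integers and suppose λ = (λ₁ ≥ ... ≥ λₙ) and μ = (μ₁ ≥ ... ≥ μₙ) are partitions such that λᵢ − λ_{i+k+1} > 2⌊n/(k+1)⌋(r−1) for all 1 ≤ i ≤ n−k−1, μ also satisfies this condition, and for every residue class 1 ≤ i ≤ k+1 the multisets {(r−1)l + μ_{(k+1)l+i} : l ≥ 0, 1 ≤ (k+1)l+i ≤ n} and {(r−1)l + λ_{(k+1)l+i} : l ≥ 0, 1 ≤ (k+1)l+i ≤ n} are equal. Then λ = μ. -/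
lemma my_step_anti (f : ℕ → ℕ) (m : ℕ) (h : ∀ l, l + 1 < m → f (l + 1) ≤ f l) :
    ∀ a b, a ≤ b → b < m → f b ≤ f a := by
  intro a b hab hbm
  induction b, hab using Nat.le_induction with
  | base => exact le_rfl
  | succ b hb ih => exact le_trans (h b hbm) (ih (by omega))

lemma my_aux (f g : ℕ → ℕ) : ∀ m, (∀ l, l + 1 < m → f (l + 1) ≤ f l) →
    (∀ l, l + 1 < m → g (l + 1) ≤ g l) →
    (Multiset.range m).map f = (Multiset.range m).map g →
    ∀ l, l < m → f l = g l := by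
  intro m
  induction m with
  | zero => intro _ _ _ l hl; omega
  | succ m ih =>
    intro hf hg hmap l hl
    have hfm : f m = g m := by
      have h1 : f m ∈ (Multiset.range (m + 1)).map g := by
        rw [← hmap]
        exact Multiset.mem_map_of_mem f (Multiset.mem_range.mpr (Nat.lt_succ_self m))
      have h2 : g m ∈ (Multiset.range (m + 1)).map f := by
        rw [hmap]
        exact Multiset.mem_map_of_mem g (Multiset.mem_range.mpr (Nat.lt_succ_self m))
      obtain ⟨a, ha, hfa⟩ := Multiset.mem_map.mp h1
      obtain ⟨b, hb, hgb⟩ := Multiset.mem_map.mp h2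
      rw [Multiset.mem_range] at ha hb
      have hga : g m ≤ g a := my_step_anti g (m + 1) hg a m (by omega) (by omega)
      have hfb : f m ≤ f b := my_step_anti f (m + 1) hf b m (by omega) (by omega)
      omega
    rcases Nat.lt_succ_iff_lt_or_eq.mp hl with hlm | hlm
    · have hmap' : (Multiset.range m).map f = (Multiset.range m).map g := by
        have := hmap
        rw [Multiset.range_succ, Multiset.map_cons, Multiset.map_cons, hfm] at this
        exact (Multiset.cons_inj_right _).mp this
      exact ih (fun l h => hf l (by omega)) (fun l h => hg l (by omega)) hmap' l hlm
    · rw [hlm]; exact hfm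

open Classical in
theorem stmt_4 (k r n : ℕ) (hk : 1 ≤ k) (hr : 2 ≤ r) (hn : k + 1 ≤ n)
    (lam mu : ℕ → ℕ)
    (hlam_dec : ∀ i, 1 ≤ i → i < n → lam (i + 1) ≤ lam i)
    (hmu_dec : ∀ i, 1 ≤ i → i < n → mu (i + 1) ≤ mu i)
    (hlam_gap : ∀ i, 1 ≤ i → i + k + 1 ≤ n →
      lam (i + k + 1) + 2 * (n / (k + 1)) * (r - 1) < lam i)
    (hmu_gap : ∀ i, 1 ≤ i → i + k + 1 ≤ n →
      mu (i + k + 1) + 2 * (n / (k + 1)) * (r - 1) < mu i)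
    (hmult : ∀ i, 1 ≤ i → i ≤ k + 1 →
      ((Finset.range n).filter (fun l => (k + 1) * l + i ≤ n)).val.map
          (fun l => (r - 1) * l + mu ((k + 1) * l + i))
        = ((Finset.range n).filter (fun l => (k + 1) * l + i ≤ n)).val.map
          (fun l => (r - 1) * l + lam ((k + 1) * l + i))) :
    ∀ i, 1 ≤ i → i ≤ n → lam i = mu i := by
  intro i0 h1 h2
  set q := (i0 - 1) / (k + 1) with hq
  set i := (i0 - 1) % (k + 1) + 1 with hi
  have hi1 : 1 ≤ i := by omega
  have hi2 : i ≤ k + 1 := by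
    have := Nat.mod_lt (i0 - 1) (show 0 < k + 1 by omega)
    omega
  have hdecomp : (k + 1) * q + i = i0 := by
    have hdm : (k + 1) * q + (i0 - 1) % (k + 1) = i0 - 1 := by
      rw [hq]; exact Nat.div_add_mod _ _
    omega
  set m := (n - i) / (k + 1) + 1 with hm
  -- the filter set is range m
  have hS : (Finset.range n).filter (fun l => (k + 1) * l + i ≤ n)
      = Finset.range m := by
    ext l
    simp only [Finset.mem_filter, Finset.mem_range, hm, Nat.lt_succ_iff]
    rw [Nat.le_div_iff_mul_le (show 0 < k + 1 by omega)]
    have hle : l ≤ (k + 1) * l := Nat.le_mul_of_pos_left l (by omega)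
    have hcomm : l * (k + 1) = (k + 1) * l := Nat.mul_comm _ _
    rw [hcomm]
    generalize (k + 1) * l = t at hle ⊢
    omega
  have hd : 1 ≤ n / (k + 1) := (Nat.one_le_div_iff (by omega)).mpr hn
  -- antitone steps
  have hstep : ∀ (f : ℕ → ℕ),
      (∀ j, 1 ≤ j → j + k + 1 ≤ n → f (j + k + 1) + 2 * (n / (k + 1)) * (r - 1) < f j) →
      ∀ l, l + 1 < m → (r - 1) * (l + 1) + f ((k + 1) * (l + 1) + i)
        ≤ (r - 1) * l + f ((k + 1) * l + i) := by
    intro f hgap l hl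
    have hl' : (k + 1) * (l + 1) + i ≤ n := by
      have : l + 1 ≤ (n - i) / (k + 1) := by omega
      have h3 : (l + 1) * (k + 1) ≤ n - i :=
        (Nat.le_div_iff_mul_le (show 0 < k + 1 by omega)).mp this
      have hcomm : (l + 1) * (k + 1) = (k + 1) * (l + 1) := Nat.mul_comm _ _
      omega
    have hidx : (k + 1) * l + i + k + 1 = (k + 1) * (l + 1) + i := by ring
    have hg := hgap ((k + 1) * l + i) (by omega) (by omega)
    rw [hidx] at hg
    have hmul : r - 1 ≤ 2 * (n / (k + 1)) * (r - 1) := by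
      have : 1 ≤ 2 * (n / (k + 1)) := by omega
      calc r - 1 = 1 * (r - 1) := by ring
        _ ≤ 2 * (n / (k + 1)) * (r - 1) := Nat.mul_le_mul_right _ this
    have hsucc : (r - 1) * (l + 1) = (r - 1) * l + (r - 1) := by ring
    rw [hsucc]
    generalize 2 * (n / (k + 1)) * (r - 1) = B at hg hmul
    omega
  have hmult' := hmult i hi1 hi2
  rw [hS, Finset.range_val] at hmult'
  have := my_aux (fun l => (r - 1) * l + mu ((k + 1) * l + i))
      (fun l => (r - 1) * l + lam ((k + 1) * l + i)) m
      (hstep mu hmu_gap) (hstep lam hlam_gap) hmult' q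
      (by
        have hle : (k + 1) * q + i ≤ n := by omega
        have : q * (k + 1) ≤ n - i := by
          have hcomm : q * (k + 1) = (k + 1) * q := Nat.mul_comm _ _
          omega
        have := (Nat.le_div_iff_mul_le (show 0 < k + 1 by omega)).mpr this
        omega)
  simp only [hdecomp] at this
  omega
end

section
/- Let k ≥ 1, r ≥ 2 and let λ ∈ ℤ_{≥0}^{k+1} be a partition (weakly decreasing) with λ₁ ≤ r−2. Let d ≥ 0 and define π_{k+1,d}(m(λ)) to be the set of partitions μ of length k+1 with |μ| = d such that for each 0 ≤ a ≤ r−2, the number of indices i with μᵢ ≡ a (mod r−1) equals the number of indices i with λᵢ = a. Then π_{k+1,d}(m(λ)) contains at most one partition ν that fails the (k,r,k+1)-admissibility condition ν₁ − ν_{k+1} ≥ r, and every other μ ∈ π_{k+1,d}(m(λ)) satisfies μ ≻ ν in the total order (|μ| > |ν|, or |μ| = |ν| and μ > ν lexicographically). -/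
open Classical in
private lemma aux_sum_le {n : ℕ} (A B : Finset (Fin n)) (f g : Fin n → ℕ)
    (hcard : A.card = B.card)
    (h : ∀ i ∈ A, ∀ i' ∈ B, f i ≤ g i') :
    ∑ i ∈ A, f i ≤ ∑ i ∈ B, g i := by
  rcases B.eq_empty_or_nonempty with hB | hB
  · have : A = ∅ := Finset.card_eq_zero.mp (by simp [hcard, hB])
    simp [this]
  · have hx : ∀ i ∈ A, f i ≤ B.inf' hB g :=
      fun i hi => Finset.le_inf' _ _ (fun i' hi' => h i hi i' hi')
    calc ∑ i ∈ A, f i ≤ ∑ _i ∈ A, B.inf' hB g := Finset.sum_le_sum hx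
      _ = A.card * B.inf' hB g := by simp [mul_comm]
      _ = B.card * B.inf' hB g := by rw [hcard]
      _ = ∑ _i ∈ B, B.inf' hB g := by simp [mul_comm]
      _ ≤ ∑ i ∈ B, g i := Finset.sum_le_sum (fun i hi => Finset.inf'_le g hi)

open Classical in
private lemma aux_sum_lt {n : ℕ} (A B : Finset (Fin n)) (f g : Fin n → ℕ)
    (hcard : A.card = B.card) (j : Fin n) (hj : j ∈ B)
    (h : ∀ i ∈ A, ∀ i' ∈ B, f i ≤ g i')
    (hs : ∀ i ∈ A, f i < g j) :
    ∑ i ∈ A, f i < ∑ i ∈ B, g i := by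
  have hA : A.Nonempty := by
    rw [← Finset.card_pos, hcard, Finset.card_pos]; exact ⟨j, hj⟩
  obtain ⟨a, ha⟩ := hA
  rw [← Finset.sum_erase_add A f ha, ← Finset.sum_erase_add B g hj]
  have h1 : ∑ i ∈ A.erase a, f i ≤ ∑ i ∈ B.erase j, g i :=
    aux_sum_le _ _ _ _
      (by rw [Finset.card_erase_of_mem ha, Finset.card_erase_of_mem hj, hcard])
      (fun i hi i' hi' => h i (Finset.mem_of_mem_erase hi) i' (Finset.mem_of_mem_erase hi'))
  have h2 : f a < g j := hs a ha
  omega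

open Classical in
private lemma split_card {n : ℕ} (Q P : Fin n → Prop) :
    (Finset.univ.filter (fun i => P i ∧ Q i)).card
      + (Finset.univ.filter (fun i => ¬ P i ∧ Q i)).card
    = (Finset.univ.filter Q).card := by
  rw [show (Finset.univ.filter (fun i => P i ∧ Q i))
        = (Finset.univ.filter Q).filter P by ext x; simp [and_comm],
      show (Finset.univ.filter (fun i => ¬ P i ∧ Q i))
        = (Finset.univ.filter Q).filter (fun i => ¬ P i) by ext x; simp [and_comm]]
  exact Finset.card_filter_add_card_filter_not (p := P)

open Classical in
private lemma key_lemma (k r : ℕ) (hr : 2 ≤ r) (μ ν : Fin (k+1) → ℕ)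
    (hμ : ∀ i j : Fin (k + 1), i ≤ j → μ j ≤ μ i)
    (hν : ∀ i j : Fin (k + 1), i ≤ j → ν j ≤ ν i)
    (hsum : ∑ i, μ i = ∑ i, ν i)
    (hcount : ∀ a, a < r - 1 →
      (Finset.univ.filter (fun i => μ i % (r - 1) = a)).card
        = (Finset.univ.filter (fun i => ν i % (r - 1) = a)).card)
    (hadm : ν 0 < ν (Fin.last k) + r)
    (hne : μ ≠ ν) :
    ∃ j : Fin (k + 1), (∀ i, i < j → μ i = ν i) ∧ ν j < μ j := by
  have hr1 : 0 < r - 1 := by omega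
  have hDne : (Finset.univ.filter (fun i : Fin (k+1) => μ i ≠ ν i)).Nonempty := by
    rw [Function.ne_iff] at hne
    obtain ⟨i, hi⟩ := hne
    exact ⟨i, by simp [hi]⟩
  set j := (Finset.univ.filter (fun i : Fin (k+1) => μ i ≠ ν i)).min' hDne with hjdef
  have hprefix : ∀ i, i < j → μ i = ν i := by
    intro i hi
    by_contra hcon
    exact absurd (Finset.min'_le _ i (by simp [hcon])) (not_le.mpr hi)
  have hjne : μ j ≠ ν j := by
    have := Finset.min'_mem _ hDne
    simpa using this
  refine ⟨j, hprefix, ?_⟩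
  rcases lt_trichotomy (ν j) (μ j) with h | h | hlt
  · exact h
  · exact absurd h.symm hjne
  exfalso
  -- key pointwise comparison
  have hK : ∀ i i' : Fin (k+1), j ≤ i → j ≤ i' →
      μ i % (r - 1) = ν i' % (r - 1) → μ i ≤ ν i' := by
    intro i i' hi hi' hmod
    by_contra hcon
    push_neg at hcon
    have hdvd : (r - 1) ∣ μ i - ν i' := (Nat.modEq_iff_dvd' hcon.le).mp hmod.symm
    have hge : r - 1 ≤ μ i - ν i' := Nat.le_of_dvd (by omega) hdvd
    have h1 : μ i ≤ μ j := hμ j i hi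
    have h2 : ν (Fin.last k) ≤ ν i' := hν i' (Fin.last k) (Fin.le_last i')
    have h3 : ν j ≤ ν 0 := hν 0 j (Fin.zero_le j)
    omega
  -- suffix residue counts agree
  have hcardS : ∀ a,  a < r - 1 →
      (Finset.univ.filter (fun i : Fin (k+1) => j ≤ i ∧ μ i % (r - 1) = a)).card
        = (Finset.univ.filter (fun i : Fin (k+1) => j ≤ i ∧ ν i % (r - 1) = a)).card := by
    intro a ha
    have hpre : Finset.univ.filter (fun i : Fin (k+1) => ¬ j ≤ i ∧ μ i % (r - 1) = a)
        = Finset.univ.filter (fun i : Fin (k+1) => ¬ j ≤ i ∧ ν i % (r - 1) = a) := by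
      apply Finset.filter_congr
      intro i _
      constructor
      · rintro ⟨hh1, hh2⟩; exact ⟨hh1, by rw [← hprefix i (not_le.mp hh1)]; exact hh2⟩
      · rintro ⟨hh1, hh2⟩; exact ⟨hh1, by rw [hprefix i (not_le.mp hh1)]; exact hh2⟩
    have h3 := hcount a ha
    have e1 : Finset.univ.filter (fun i : Fin (k+1) => μ i % (r - 1) = a)
        = Finset.univ.filter (fun i : Fin (k+1) => j ≤ i ∧ μ i % (r - 1) = a)
          ∪ Finset.univ.filter (fun i : Fin (k+1) => ¬ j ≤ i ∧ μ i % (r - 1) = a) := by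
      ext x
      by_cases hx : j ≤ x
      · simp [hx]
      · simp [hx, not_le.mp hx]
    have e2 : Finset.univ.filter (fun i : Fin (k+1) => ν i % (r - 1) = a)
        = Finset.univ.filter (fun i : Fin (k+1) => j ≤ i ∧ ν i % (r - 1) = a)
          ∪ Finset.univ.filter (fun i : Fin (k+1) => ¬ j ≤ i ∧ ν i % (r - 1) = a) := by
      ext x
      by_cases hx : j ≤ x
      · simp [hx]
      · simp [hx, not_le.mp hx]
    have d1 : Disjoint (Finset.univ.filter (fun i : Fin (k+1) => j ≤ i ∧ μ i % (r - 1) = a))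
        (Finset.univ.filter (fun i : Fin (k+1) => ¬ j ≤ i ∧ μ i % (r - 1) = a)) := by
      rw [Finset.disjoint_left]
      intro x hx hx'
      exact (Finset.mem_filter.mp hx').2.1 (Finset.mem_filter.mp hx).2.1
    have d2 : Disjoint (Finset.univ.filter (fun i : Fin (k+1) => j ≤ i ∧ ν i % (r - 1) = a))
        (Finset.univ.filter (fun i : Fin (k+1) => ¬ j ≤ i ∧ ν i % (r - 1) = a)) := by
      rw [Finset.disjoint_left]
      intro x hx hx'
      exact (Finset.mem_filter.mp hx').2.1 (Finset.mem_filter.mp hx).2.1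
    have c1 := congrArg Finset.card e1
    have c2 := congrArg Finset.card e2
    rw [Finset.card_union_of_disjoint d1] at c1
    rw [Finset.card_union_of_disjoint d2] at c2
    have hpre' := congrArg Finset.card hpre
    omega
  -- suffix sums agree
  have hsumS : ∑ i ∈ Finset.univ.filter (fun i : Fin (k+1) => j ≤ i), μ i
      = ∑ i ∈ Finset.univ.filter (fun i : Fin (k+1) => j ≤ i), ν i := by
    have h1 := Finset.sum_filter_add_sum_filter_not Finset.univ (fun i : Fin (k+1) => j ≤ i) μ
    have h2 := Finset.sum_filter_add_sum_filter_not Finset.univ (fun i : Fin (k+1) => j ≤ i) ν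
    have h3 : ∑ i ∈ Finset.univ.filter (fun i : Fin (k+1) => ¬ j ≤ i), μ i
        = ∑ i ∈ Finset.univ.filter (fun i : Fin (k+1) => ¬ j ≤ i), ν i :=
      Finset.sum_congr rfl (fun i hi => hprefix i (not_le.mp (Finset.mem_filter.mp hi).2))
    omega
  -- fiberwise decomposition
  have hfib : ∀ f : Fin (k+1) → ℕ,
      ∑ a ∈ Finset.range (r - 1),
        ∑ i ∈ Finset.univ.filter (fun i : Fin (k+1) => j ≤ i ∧ f i % (r - 1) = a), f i
      = ∑ i ∈ Finset.univ.filter (fun i : Fin (k+1) => j ≤ i), f i := by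
    intro f
    rw [← Finset.sum_fiberwise_of_maps_to
        (g := fun i : Fin (k+1) => f i % (r - 1)) (t := Finset.range (r - 1))
        (fun i _ => Finset.mem_range.mpr (Nat.mod_lt _ hr1)) f]
    apply Finset.sum_congr rfl
    intro a _
    rw [Finset.filter_filter]
  -- the strict sum comparison
  have hmain : ∑ a ∈ Finset.range (r - 1),
      ∑ i ∈ Finset.univ.filter (fun i : Fin (k+1) => j ≤ i ∧ μ i % (r - 1) = a), μ i
    < ∑ a ∈ Finset.range (r - 1),
      ∑ i ∈ Finset.univ.filter (fun i : Fin (k+1) => j ≤ i ∧ ν i % (r - 1) = a), ν i := by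
    apply Finset.sum_lt_sum
    · intro a ha
      refine aux_sum_le _ _ _ _ (hcardS a (Finset.mem_range.mp ha)) ?_
      intro i hi i' hi'
      have h1 := (Finset.mem_filter.mp hi).2
      have h2 := (Finset.mem_filter.mp hi').2
      exact hK i i' h1.1 h2.1 (h1.2.trans h2.2.symm)
    · refine ⟨ν j % (r - 1), Finset.mem_range.mpr (Nat.mod_lt _ hr1), ?_⟩
      have hjB : j ∈ Finset.univ.filter
          (fun i : Fin (k+1) => j ≤ i ∧ ν i % (r - 1) = ν j % (r - 1)) := by
        simp
      refine aux_sum_lt _ _ _ _ (hcardS _ (Nat.mod_lt _ hr1)) j hjB ?_ ?_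
      · intro i hi i' hi'
        have h1 := (Finset.mem_filter.mp hi).2
        have h2 := (Finset.mem_filter.mp hi').2
        exact hK i i' h1.1 h2.1 (h1.2.trans h2.2.symm)
      · intro i hi
        have h1 := (Finset.mem_filter.mp hi).2
        exact lt_of_le_of_lt (hμ j i h1.1) hlt
  rw [hfib μ, hfib ν, hsumS] at hmain
  exact lt_irrefl _ hmain

open Classical in
theorem stmt_5 (k r d : ℕ) (hk : 1 ≤ k) (hr : 2 ≤ r)
    (lam : Fin (k + 1) → ℕ)
    (hlam_dec : ∀ i j : Fin (k + 1), i ≤ j → lam j ≤ lam i)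
    (hlam_top : ∀ i, lam i ≤ r - 2)
    (inPi : (Fin (k + 1) → ℕ) → Prop)
    (hPi : ∀ μ, inPi μ ↔
      ((∀ i j : Fin (k + 1), i ≤ j → μ j ≤ μ i) ∧ (∑ i, μ i) = d ∧
        ∀ a, a < r - 1 →
          (Finset.univ.filter (fun i => μ i % (r - 1) = a)).card
            = (Finset.univ.filter (fun i => lam i = a)).card)) :
    (∀ ν ν', inPi ν → inPi ν' →
        ν 0 < ν (Fin.last k) + r → ν' 0 < ν' (Fin.last k) + r → ν = ν') ∧
    (∀ ν μ, inPi ν → inPi μ → ν 0 < ν (Fin.last k) + r → μ ≠ ν →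
        (∑ i, ν i) < (∑ i, μ i) ∨
          ((∑ i, μ i) = (∑ i, ν i) ∧
            ∃ j : Fin (k + 1), (∀ i, i < j → μ i = ν i) ∧ ν j < μ j)) := by
  have hcount : ∀ ν μ : Fin (k+1) → ℕ, inPi ν → inPi μ → ∀ a, a < r - 1 →
      (Finset.univ.filter (fun i => μ i % (r - 1) = a)).card
        = (Finset.univ.filter (fun i => ν i % (r - 1) = a)).card := by
    intro ν μ hν hμ a ha
    rw [((hPi μ).mp hμ).2.2 a ha, ((hPi ν).mp hν).2.2 a ha]
  have hsum : ∀ ν μ : Fin (k+1) → ℕ, inPi ν → inPi μ → ∑ i, μ i = ∑ i, ν i := by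
    intro ν μ hν hμ
    rw [((hPi μ).mp hμ).2.1, ((hPi ν).mp hν).2.1]
  constructor
  · intro ν ν' h1 h2 ha1 ha2
    by_contra hne
    obtain ⟨j1, hp1, hl1⟩ := key_lemma k r hr ν' ν ((hPi ν').mp h2).1 ((hPi ν).mp h1).1
      (hsum ν ν' h1 h2) (hcount ν ν' h1 h2) ha1 (fun hc => hne (hc ▸ rfl))
    obtain ⟨j2, hp2, hl2⟩ := key_lemma k r hr ν ν' ((hPi ν).mp h1).1 ((hPi ν').mp h2).1
      (hsum ν' ν h2 h1) (hcount ν' ν h2 h1) ha2 (fun hc => hne hc)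
    rcases lt_trichotomy j1 j2 with h | h | h
    · have := hp2 j1 h; omega
    · subst h; omega
    · have := hp1 j2 h; omega
  · intro ν μ hν hμ hadm hne
    exact Or.inr ⟨hsum ν μ hν hμ,
      key_lemma k r hr μ ν ((hPi μ).mp hμ).1 ((hPi ν).mp hν).1
        (hsum ν μ hν hμ) (hcount ν μ hν hμ) hadm hne⟩
end

section
/- Let q be a formal variable and define (a;q)_l = ∏_{i=0}^{l−1}(1 − a q^i). Let k ≥ 1, r ≥ 2, n ≥ k+1, and let λ be a (k,r,n)-admissible partition (λᵢ − λ_{i+k} ≥ r for all valid i). Consider the product P = ∏_{1≤i<j≤n} (t^{j−i+1}; q)_{λᵢ−λⱼ} / (t^{j−i}; q)_{λᵢ−λⱼ} as a rational function in t and q. Under the substitution homomorphism sending (t,q) to a point with t^{k+1}q^{r−1} = 1 generically (i.e., with t^x q^y = 1 iff (x,y) ∈ ℤ·(k+1, r−1)), the multiplicity of vanishing of P (order of zero in the defining equation t^{k+1}q^{r−1} − 1) equals ⌊n/(k+1)⌋. -/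
/-!
Admissibility gives `λᵢ - λⱼ ≥ r l > (r - 1) l` as soon as `j - i ≥ k l`, so the exponent
conditions alone decide which factors vanish: the vanishing numerator factors are parametrised by
the pairs `(i, l)` with `i + (k + 1) l ≤ n + 1`, the vanishing denominator factors by those with
`i + (k + 1) l ≤ n`. The excess pairs satisfy `i + (k + 1) l = n + 1` and are determined by
`1 ≤ l ≤ n / (k + 1)`.
-/

open Finset

section Admissible

variable {lam : ℕ → ℕ} {n k r : ℕ}

lemma antitoneOn_Icc_of_succ_le (hdec : ∀ i, 1 ≤ i → i < n → lam (i + 1) ≤ lam i) :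
    AntitoneOn lam (Set.Icc 1 n) :=
  antitoneOn_of_add_one_le Set.ordConnected_Icc fun i _ hi hi' => hdec i hi.1 hi'.2

lemma add_mul_le_of_admissible (hadm : ∀ i, 1 ≤ i → i + k ≤ n → lam (i + k) + r ≤ lam i)
    {i : ℕ} (hi : 1 ≤ i) (l : ℕ) (hin : i + k * l ≤ n) : lam (i + k * l) + r * l ≤ lam i := by
  induction l with
  | zero => simp
  | succ l ih =>
    rw [mul_add_one, ← add_assoc] at hin ⊢
    have hstep := hadm (i + k * l) (by omega) hin
    have hrec := ih (by omega)
    rw [mul_add_one]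
    omega

lemma sub_one_mul_add_lt_of_admissible (hanti : AntitoneOn lam (Set.Icc 1 n))
    (hadm : ∀ i, 1 ≤ i → i + k ≤ n → lam (i + k) + r ≤ lam i) (hr : 1 ≤ r)
    {i j l : ℕ} (hi : 1 ≤ i) (hl : 1 ≤ l) (hij : i + k * l ≤ j) (hj : j ≤ n) :
    (r - 1) * l + lam j < lam i := by
  have hchain := add_mul_le_of_admissible hadm hi l (hij.trans hj)
  have hmono := hanti ⟨by omega, hij.trans hj⟩ ⟨by omega, hj⟩ hij
  have hr' : (r - 1) * l + l = r * l := by rw [← add_one_mul, Nat.sub_add_cancel hr]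
  omega

end Admissible

def stepPairs (a N : ℕ) : Finset (ℕ × ℕ) :=
  (Icc 1 N ×ˢ Icc 1 N).filter fun p => p.1 + a * p.2 ≤ N

lemma card_stepPairs_succ {a : ℕ} (ha : 0 < a) (N : ℕ) :
    #(stepPairs a (N + 1)) = #(stepPairs a N) + N / a := by
  rw [stepPairs, ← card_filter_add_card_filter_not fun p : ℕ × ℕ => p.1 + a * p.2 ≤ N,
    filter_filter, filter_filter]
  congr 1
  · congr 1
    ext ⟨i, l⟩
    have := Nat.le_mul_of_pos_left l ha
    simp only [stepPairs, mem_filter, mem_product, mem_Icc]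
    omega
  · rw [← Nat.add_sub_cancel (N / a) 1, ← Nat.card_Icc]
    apply card_nbij Prod.snd
    · rintro ⟨i, l⟩ hp
      simp only [coe_filter, mem_product, mem_Icc, Set.mem_ofPred_eq] at hp
      simp only [coe_Icc, Set.mem_Icc, Nat.le_div_iff_mul_le ha, mul_comm l]
      omega
    · rintro ⟨i, l⟩ hp ⟨i', l'⟩ hp' (rfl : l = l')
      simp only [coe_filter, mem_product, mem_Icc, Set.mem_ofPred_eq] at hp hp'
      simp only [Prod.mk.injEq, and_true]
      omega
    · intro l hl
      simp only [coe_Icc, Set.mem_Icc, Nat.le_div_iff_mul_le ha, mul_comm l] at hl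
      have := Nat.le_mul_of_pos_left l ha
      refine ⟨(N + 1 - a * l, l), ?_, rfl⟩
      simp only [coe_filter, mem_product, mem_Icc, Set.mem_ofPred_eq]
      omega

open Classical in
/-- The index set `((i, j), m)` of the factors `1 - t ^ (j - i + c) * q ^ m`, `1 ≤ i < j ≤ n`,
`m < λᵢ - λⱼ`, of `∏ (t ^ (j - i + c); q)_(λᵢ - λⱼ)` that vanish at a generic point of
`t ^ a * q ^ b = 1`; `c = 1` is the numerator of the product and `c = 0` its denominator. -/
noncomputable def vanishingFactors (lam : ℕ → ℕ) (n a b c : ℕ) : Finset ((ℕ × ℕ) × ℕ) :=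
  ((Icc 1 n ×ˢ Icc 1 n) ×ˢ range (lam 1)).filter fun x => x.1.1 < x.1.2 ∧
    x.2 + lam x.1.2 < lam x.1.1 ∧ ∃ l, 1 ≤ l ∧ x.1.1 + a * l = x.1.2 + c ∧ x.2 = b * l

lemma card_vanishingFactors {lam : ℕ → ℕ} {n a b c : ℕ} (hanti : AntitoneOn lam (Set.Icc 1 n))
    (hca : c < a)
    (hgap : ∀ i j l, 1 ≤ i → 1 ≤ l → i + a * l = j + c → j ≤ n → b * l + lam j < lam i) :
    #(vanishingFactors lam n a b c) = #(stepPairs a (n + c)) := by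
  symm
  apply card_nbij fun p : ℕ × ℕ => ((p.1, p.1 + a * p.2 - c), b * p.2)
  · rintro ⟨i, l⟩ hp
    simp only [stepPairs, coe_filter, mem_product, mem_Icc, Set.mem_ofPred_eq] at hp
    obtain ⟨⟨⟨hi, -⟩, hl, -⟩, hil⟩ := hp
    have hal := Nat.le_mul_of_pos_right a hl
    have hlt := hgap i (i + a * l - c) l hi hl (by omega) (by omega)
    have hle : lam i ≤ lam 1 := hanti ⟨le_rfl, by omega⟩ ⟨hi, by omega⟩ hi
    simp only [vanishingFactors, coe_filter, mem_product, mem_Icc, mem_range, Set.mem_ofPred_eq]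
    exact ⟨⟨⟨⟨hi, by omega⟩, by omega, by omega⟩, by omega⟩, by omega, by omega,
      l, hl, by omega, rfl⟩
  · rintro ⟨i, l⟩ hp ⟨i', l'⟩ hp' h
    simp only [stepPairs, coe_filter, mem_product, mem_Icc, Set.mem_ofPred_eq] at hp hp'
    simp only [Prod.mk.injEq] at h ⊢
    obtain ⟨⟨rfl, hj⟩, -⟩ := h
    have hal := Nat.le_mul_of_pos_right a hp.1.2.1
    have hal' := Nat.le_mul_of_pos_right a hp'.1.2.1
    have hmul : a * l = a * l' := by omega
    exact ⟨rfl, Nat.eq_of_mul_eq_mul_left (by omega) hmul⟩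
  · rintro ⟨⟨i, j⟩, m⟩ hx
    simp only [vanishingFactors, coe_filter, mem_product, mem_Icc, mem_range,
      Set.mem_ofPred_eq] at hx
    obtain ⟨⟨⟨⟨hi, -⟩, -, hj⟩, -⟩, -, -, l, hl, hij, rfl⟩ := hx
    have hla := Nat.le_mul_of_pos_left l (show 0 < a by omega)
    refine ⟨(i, l), ?_, ?_⟩
    · simp only [stepPairs, coe_filter, mem_product, mem_Icc, Set.mem_ofPred_eq]
      omega
    · simp only [Prod.mk.injEq, true_and, and_true]
      omega

open Classical in
theorem stmt_11_general (k r n : ℕ) (hk : 1 ≤ k) (hr : 2 ≤ r)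
    (lam : ℕ → ℕ)
    (hdec : ∀ i, 1 ≤ i → i < n → lam (i + 1) ≤ lam i)
    (hadm : ∀ i, 1 ≤ i → i + k ≤ n → lam (i + k) + r ≤ lam i) :
    ((((Finset.Icc 1 n ×ˢ Finset.Icc 1 n) ×ˢ Finset.range (lam 1)).filter
        (fun x => x.1.1 < x.1.2 ∧ x.2 + lam x.1.2 < lam x.1.1 ∧
          ∃ l, 1 ≤ l ∧ x.1.1 + (k + 1) * l = x.1.2 + 1 ∧ x.2 = (r - 1) * l)).card : ℤ)
      - ((((Finset.Icc 1 n ×ˢ Finset.Icc 1 n) ×ˢ Finset.range (lam 1)).filter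
        (fun x => x.1.1 < x.1.2 ∧ x.2 + lam x.1.2 < lam x.1.1 ∧
          ∃ l, 1 ≤ l ∧ x.1.1 + (k + 1) * l = x.1.2 ∧ x.2 = (r - 1) * l)).card : ℤ)
      = (n / (k + 1) : ℕ) := by
  have hanti := antitoneOn_Icc_of_succ_le hdec
  have hgap (c : ℕ) (hc : c ≤ 1) (i j l : ℕ) (hi : 1 ≤ i) (hl : 1 ≤ l)
      (hij : i + (k + 1) * l = j + c) (hj : j ≤ n) : (r - 1) * l + lam j < lam i :=
    sub_one_mul_add_lt_of_admissible hanti hadm (by omega) hi hl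
      (by rw [add_one_mul] at hij; omega) hj
  have zeros := card_vanishingFactors hanti (by omega) (hgap 1 le_rfl)
  have poles := card_vanishingFactors hanti (by omega) (hgap 0 zero_le_one)
  change (#(vanishingFactors lam n (k + 1) (r - 1) 1) : ℤ)
    - #(vanishingFactors lam n (k + 1) (r - 1) 0) = _
  rw [zeros, poles, add_zero, card_stepPairs_succ (by omega), Nat.cast_add, add_sub_cancel_left]

open Classical in
theorem stmt_11 (k r n : ℕ) (hk : 1 ≤ k) (hr : 2 ≤ r) (hn : k + 1 ≤ n)
    (lam : ℕ → ℕ)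
    (hdec : ∀ i, 1 ≤ i → i < n → lam (i + 1) ≤ lam i)
    (hadm : ∀ i, 1 ≤ i → i + k ≤ n → lam (i + k) + r ≤ lam i) :
    ((((Finset.Icc 1 n ×ˢ Finset.Icc 1 n) ×ˢ Finset.range (lam 1)).filter
        (fun x => x.1.1 < x.1.2 ∧ x.2 + lam x.1.2 < lam x.1.1 ∧
          ∃ l, 1 ≤ l ∧ x.1.1 + (k + 1) * l = x.1.2 + 1 ∧ x.2 = (r - 1) * l)).card : ℤ)
      - ((((Finset.Icc 1 n ×ˢ Finset.Icc 1 n) ×ˢ Finset.range (lam 1)).filter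
        (fun x => x.1.1 < x.1.2 ∧ x.2 + lam x.1.2 < lam x.1.1 ∧
          ∃ l, 1 ≤ l ∧ x.1.1 + (k + 1) * l = x.1.2 ∧ x.2 = (r - 1) * l)).card : ℤ)
      = (n / (k + 1) : ℕ) :=
  stmt_11_general k r n hk hr lam hdec hadm
end

section
/- Let k ≥ 1, r ≥ 2, n ≥ k+1. Suppose μ is a partition of length n such that μᵢ − μ_{i+(k+1)l−1} ≥ (r−1)l + 1 and μᵢ − μ_{i+(k+1)l} ≥ (r−1)l + 1 hold for all l ≥ 1 and all valid i with the single exception that μ₁ − μ_{k+1} ≤ r − 1 (failing the case (i,l) = (1,1) of the first family). Then #{(i,l): i+(k+1)l−1 ≤ n, μᵢ − μ_{i+(k+1)l−1} ≥ (r−1)l+1} − #{(i,l): i+(k+1)l ≤ n, μᵢ − μ_{i+(k+1)l} ≥ (r−1)l+1} = ⌊n/(k+1)⌋ − 1. -/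
open Classical in
theorem stmt_12 (k r n : ℕ) (hk : 1 ≤ k) (hr : 2 ≤ r) (hn : k + 1 ≤ n)
    (mu : ℕ → ℕ)
    (hdec : ∀ i, 1 ≤ i → i < n → mu (i + 1) ≤ mu i)
    (h1 : ∀ i l, 1 ≤ i → 1 ≤ l → i + (k + 1) * l ≤ n + 1 → ¬(i = 1 ∧ l = 1) →
      mu (i + (k + 1) * l - 1) + (r - 1) * l + 1 ≤ mu i)
    (h2 : ∀ i l, 1 ≤ i → 1 ≤ l → i + (k + 1) * l ≤ n →
      mu (i + (k + 1) * l) + (r - 1) * l + 1 ≤ mu i)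
    (hexc : mu 1 ≤ mu (k + 1) + (r - 1)) :
    (((Finset.Icc 1 n ×ˢ Finset.Icc 1 n).filter
        (fun p => p.1 + (k + 1) * p.2 ≤ n + 1 ∧
          mu (p.1 + (k + 1) * p.2 - 1) + (r - 1) * p.2 + 1 ≤ mu p.1)).card : ℤ)
      - (((Finset.Icc 1 n ×ˢ Finset.Icc 1 n).filter
        (fun p => p.1 + (k + 1) * p.2 ≤ n ∧
          mu (p.1 + (k + 1) * p.2) + (r - 1) * p.2 + 1 ≤ mu p.1)).card : ℤ)
      = (n / (k + 1) : ℕ) - 1 := by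
  set S := Finset.Icc 1 n ×ˢ Finset.Icc 1 n with hS
  have hmem11 : ((1,1) : ℕ × ℕ) ∈ S.filter (fun p => p.1 + (k+1)*p.2 ≤ n+1) := by
    simp only [hS, Finset.mem_filter, Finset.mem_product, Finset.mem_Icc]
    omega
  have hA : (S.filter (fun p => p.1 + (k + 1) * p.2 ≤ n + 1 ∧
      mu (p.1 + (k + 1) * p.2 - 1) + (r - 1) * p.2 + 1 ≤ mu p.1))
      = (S.filter (fun p => p.1 + (k+1)*p.2 ≤ n+1)).erase (1,1) := by
    ext ⟨i, l⟩
    simp only [Finset.mem_filter, Finset.mem_erase, hS, Finset.mem_product,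
      Finset.mem_Icc, Prod.mk.injEq, ne_eq, not_and]
    constructor
    · rintro ⟨⟨⟨hi1, hin⟩, hl1, hln⟩, hle, hineq⟩
      refine ⟨?_, ⟨⟨hi1, hin⟩, hl1, hln⟩, hle⟩
      rintro rfl rfl
      have : 1 + (k + 1) * 1 - 1 = k + 1 := by omega
      rw [this] at hineq
      omega
    · rintro ⟨hne, ⟨⟨hi1, hin⟩, hl1, hln⟩, hle⟩
      refine ⟨⟨⟨hi1, hin⟩, hl1, hln⟩, hle, h1 i l hi1 hl1 hle ?_⟩
      rintro ⟨rfl, rfl⟩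
      exact hne rfl rfl
  have hB : (S.filter (fun p => p.1 + (k + 1) * p.2 ≤ n ∧
      mu (p.1 + (k + 1) * p.2) + (r - 1) * p.2 + 1 ≤ mu p.1))
      = S.filter (fun p => p.1 + (k+1)*p.2 ≤ n) := by
    ext ⟨i, l⟩
    simp only [Finset.mem_filter, hS, Finset.mem_product, Finset.mem_Icc]
    constructor
    · rintro ⟨hs, hle, _⟩; exact ⟨hs, hle⟩
    · rintro ⟨⟨⟨hi1, hin⟩, hl1, hln⟩, hle⟩
      exact ⟨⟨⟨hi1, hin⟩, hl1, hln⟩, hle, h2 i l hi1 hl1 hle⟩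
  have e1 : S.filter (fun p => p.1+(k+1)*p.2 ≤ n+1)
      = S.filter (fun p => p.1+(k+1)*p.2 ≤ n) ∪ S.filter (fun p => p.1+(k+1)*p.2 = n+1) := by
    ext p
    by_cases hp : p ∈ S <;>
      simp only [Finset.mem_filter, Finset.mem_union, hp, true_and, false_and, or_self] <;>
      omega
  have hdisj : Disjoint (S.filter (fun p => p.1+(k+1)*p.2 ≤ n))
      (S.filter (fun p => p.1+(k+1)*p.2 = n+1)) := by
    rw [Finset.disjoint_left]
    intro p hp hq
    simp only [Finset.mem_filter] at hp hq
    omega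
  have himg : S.filter (fun p => p.1+(k+1)*p.2 = n+1)
      = (Finset.Icc 1 (n/(k+1))).image (fun l => (n+1-(k+1)*l, l)) := by
    ext ⟨i, l⟩
    simp only [Finset.mem_filter, Finset.mem_image, Finset.mem_Icc, hS,
      Finset.mem_product, Prod.mk.injEq]
    constructor
    · rintro ⟨⟨⟨hi1, hin⟩, hl1, hln⟩, heq⟩
      refine ⟨l, ⟨hl1, ?_⟩, by omega, rfl⟩
      rw [Nat.le_div_iff_mul_le (by omega : 0 < k + 1), mul_comm]
      omega
    · rintro ⟨l', ⟨hl1', hl2'⟩, heq1, rfl⟩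
      rw [Nat.le_div_iff_mul_le (by omega : 0 < k + 1), mul_comm] at hl2'
      have hge : l' ≤ (k+1) * l' := Nat.le_mul_of_pos_left _ (by omega)
      have hln : l' ≤ n := by omega
      constructor
      · exact ⟨⟨by omega, by omega⟩, hl1', hln⟩
      · omega
  have hinj : Function.Injective (fun l : ℕ => (n+1-(k+1)*l, l)) := by
    intro a b hab
    exact congrArg Prod.snd hab
  have hcount : (S.filter (fun p => p.1+(k+1)*p.2 = n+1)).card = n / (k+1) := by
    rw [himg, Finset.card_image_of_injective _ hinj, Nat.card_Icc]
    exact Nat.add_sub_cancel _ _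
  have hd : 1 ≤ n / (k+1) := (Nat.one_le_div_iff (by omega)).mpr hn
  obtain ⟨d, hd'⟩ : ∃ d, n / (k + 1) = d := ⟨_, rfl⟩
  rw [hd'] at hd hcount
  rw [hA, hB, Finset.card_erase_of_mem hmem11, e1,
    Finset.card_union_of_disjoint hdisj, hcount, hd']
  omega
end

section
/- Let r ≥ 2, k ≥ 1 and let m = (m₀, ..., m_{r−2}) be nonnegative integers with ∑ₐ mₐ = k+1. Suppose μ and ν are two partitions of length k+1 with |μ| = |ν| = d, both with residue-multiplicity vector m modulo (r−1) (for each a, exactly mₐ parts are ≡ a mod (r−1)), and both satisfying μ₁ − μ_{k+1} ≤ r−1 and ν₁ − ν_{k+1} ≤ r−1. Then μ = ν. -/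
lemma mod_step {q x y : ℕ} (hq : 0 < q) (h : x % q = y % q) (hlt : y < x) : y + q ≤ x := by
  have hx := Nat.div_add_mod x q
  have hy := Nat.div_add_mod y q
  have hd : y / q < x / q := by
    by_contra hc
    push_neg at hc
    have hm := Nat.mul_le_mul_left q hc
    omega
  have hd1 : y / q + 1 ≤ x / q := hd
  have hm := Nat.mul_le_mul_left q hd1
  rw [Nat.mul_succ] at hm
  omega

lemma no_lt (k q d : ℕ) (hq : 1 ≤ q) (m : ℕ → ℕ)
    (μ ν : Fin (k + 1) → ℕ)
    (hμdec : ∀ i j : Fin (k + 1), i ≤ j → μ j ≤ μ i)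
    (hμsum : (∑ i, μ i) = d) (hνsum : (∑ i, ν i) = d)
    (hμres : ∀ a, a < q → (Finset.univ.filter (fun i => μ i % q = a)).card = m a)
    (hνres : ∀ a, a < q → (Finset.univ.filter (fun i => ν i % q = a)).card = m a)
    (hμwin : μ 0 ≤ μ (Fin.last k) + q)
    (hνlb : ∀ i, ν (Fin.last k) ≤ ν i)
    (hlt : μ (Fin.last k) < ν (Fin.last k)) : False := by
  classical
  set t := μ (Fin.last k) with ht
  have hμlb : ∀ i, t ≤ μ i := fun i => hμdec i (Fin.last k) (Fin.le_last i)
  have hμub : ∀ i, μ i ≤ t + q := fun i => le_trans (hμdec 0 i (Fin.zero_le i)) hμwin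
  have hmaps : ∀ x ∈ Finset.univ, (fun i => μ i % q) x ∈ Finset.range q := by
    intro x _; exact Finset.mem_range.mpr (Nat.mod_lt _ hq)
  have hmapsν : ∀ x ∈ Finset.univ, (fun i => ν i % q) x ∈ Finset.range q := by
    intro x _; exact Finset.mem_range.mpr (Nat.mod_lt _ hq)
  have hdμ : ∑ a ∈ Finset.range q, ∑ i ∈ Finset.univ.filter (fun i => μ i % q = a), μ i = d := by
    rw [Finset.sum_fiberwise_of_maps_to hmaps]; exact hμsum
  have hdν : ∑ a ∈ Finset.range q, ∑ i ∈ Finset.univ.filter (fun i => ν i % q = a), ν i = d := by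
    rw [Finset.sum_fiberwise_of_maps_to hmapsν]; exact hνsum
  -- per-residue comparison
  have key : ∀ a ∈ Finset.range q,
      (∑ i ∈ Finset.univ.filter (fun i => μ i % q = a), μ i) ≤
      (∑ i ∈ Finset.univ.filter (fun i => ν i % q = a), ν i) ∧
      ((μ (Fin.last k)) % q = a →
      (∑ i ∈ Finset.univ.filter (fun i => μ i % q = a), μ i) <
      (∑ i ∈ Finset.univ.filter (fun i => ν i % q = a), ν i)) := by
    intro a haR
    have ha : a < q := Finset.mem_range.mp haR
    have hex : ∃ w, t < w ∧ w % q = a := by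
      refine ⟨a + q * (t + 1), ?_, ?_⟩
      · have : t + 1 ≤ q * (t + 1) := Nat.le_mul_of_pos_left _ hq
        omega
      · rw [Nat.add_mul_mod_self_left, Nat.mod_eq_of_lt ha]
    set C := Nat.find hex with hCdef
    have hC := Nat.find_spec hex
    have hCle : C ≤ t + q := by
      by_contra hc
      push_neg at hc
      have h1 : C - q < C := by omega
      apply Nat.find_min hex h1
      refine ⟨by omega, ?_⟩
      have h2 : C - q + q = C := by omega
      calc (C - q) % q = (C - q + q) % q := (Nat.add_mod_right _ _).symm
        _ = a := by rw [h2]; exact hC.2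
    have hμbd : ∀ i ∈ Finset.univ.filter (fun i => μ i % q = a), μ i ≤ C := by
      intro i hi
      have hi' : μ i % q = a := by simpa using hi
      rcases Nat.lt_or_ge C (μ i) with h | h
      · exfalso
        have := mod_step hq (show (μ i) % q = C % q by rw [hi', hC.2]) h
        have := hμub i
        omega
      · exact h
    have hνbd : ∀ i ∈ Finset.univ.filter (fun i => ν i % q = a), C ≤ ν i := by
      intro i hi
      have hi' : ν i % q = a := by simpa using hi
      exact Nat.find_min' hex ⟨lt_of_lt_of_le hlt (hνlb i), hi'⟩
    have hle1 : (∑ i ∈ Finset.univ.filter (fun i => μ i % q = a), μ i) ≤ m a * C := by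
      have := Finset.sum_le_card_nsmul _ _ C hμbd
      rwa [hμres a ha, smul_eq_mul] at this
    have hle2 : m a * C ≤ ∑ i ∈ Finset.univ.filter (fun i => ν i % q = a), ν i := by
      have := Finset.card_nsmul_le_sum _ _ C hνbd
      rwa [hνres a ha, smul_eq_mul] at this
    refine ⟨le_trans hle1 hle2, fun hta => lt_of_lt_of_le ?_ hle2⟩
    have hstrict : (∑ i ∈ Finset.univ.filter (fun i => μ i % q = a), μ i) <
        ∑ _i ∈ Finset.univ.filter (fun i => μ i % q = a), C := by
      apply Finset.sum_lt_sum hμbd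
      refine ⟨Fin.last k, ?_, ?_⟩
      · simp [hta]
      · exact hC.1
    rw [Finset.sum_const, hμres a ha, smul_eq_mul] at hstrict
    exact hstrict
  have : d < d := by
    calc d = ∑ a ∈ Finset.range q, ∑ i ∈ Finset.univ.filter (fun i => μ i % q = a), μ i := hdμ.symm
      _ < ∑ a ∈ Finset.range q, ∑ i ∈ Finset.univ.filter (fun i => ν i % q = a), ν i := by
          apply Finset.sum_lt_sum (fun a ha => (key a ha).1)
          refine ⟨t % q, Finset.mem_range.mpr (Nat.mod_lt _ hq), (key _ (Finset.mem_range.mpr (Nat.mod_lt _ hq))).2 rfl⟩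
      _ = d := hdν
  omega

lemma lower_mem_iff {n : ℕ} (S : Finset (Fin n))
    (hS : ∀ i j : Fin n, i ≤ j → j ∈ S → i ∈ S) (j : Fin n) :
    j ∈ S ↔ (j : ℕ) < S.card := by
  constructor
  · intro hj
    have hsub : Finset.Iic j ⊆ S := fun k hk => hS k j (Finset.mem_Iic.mp hk) hj
    have := Finset.card_le_card hsub
    rw [Fin.card_Iic] at this
    omega
  · intro hj
    by_contra hjS
    have hsub : S ⊆ Finset.Iio j := by
      intro k hk
      rw [Finset.mem_Iio]
      by_contra hc
      push_neg at hc
      exact hjS (hS j k hc hk)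
    have := Finset.card_le_card hsub
    rw [Fin.card_Iio] at this
    omega

open Classical in
theorem stmt_17 (k r d : ℕ) (hk : 1 ≤ k) (hr : 2 ≤ r)
    (m : ℕ → ℕ) (hm : ∑ a ∈ Finset.range (r - 1), m a = k + 1)
    (μ ν : Fin (k + 1) → ℕ)
    (hμdec : ∀ i j : Fin (k + 1), i ≤ j → μ j ≤ μ i)
    (hνdec : ∀ i j : Fin (k + 1), i ≤ j → ν j ≤ ν i)
    (hμsum : (∑ i, μ i) = d) (hνsum : (∑ i, ν i) = d)
    (hμres : ∀ a, a < r - 1 →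
      (Finset.univ.filter (fun i => μ i % (r - 1) = a)).card = m a)
    (hνres : ∀ a, a < r - 1 →
      (Finset.univ.filter (fun i => ν i % (r - 1) = a)).card = m a)
    (hμwin : μ 0 ≤ μ (Fin.last k) + (r - 1))
    (hνwin : ν 0 ≤ ν (Fin.last k) + (r - 1)) :
    μ = ν := by
  set q := r - 1 with hqdef
  have hq : 1 ≤ q := by omega
  -- equal minimums
  have htu : μ (Fin.last k) = ν (Fin.last k) := by
    rcases lt_trichotomy (μ (Fin.last k)) (ν (Fin.last k)) with h | h | h
    · exact absurd h (fun h => no_lt k q d hq m μ ν hμdec hμsum hνsum hμres hνres hμwin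
        (fun i => hνdec i (Fin.last k) (Fin.le_last i)) h)
    · exact h
    · exact absurd h (fun h => no_lt k q d hq m ν μ hνdec hνsum hμsum hνres hμres hνwin
        (fun i => hμdec i (Fin.last k) (Fin.le_last i)) h)
  set t := μ (Fin.last k) with ht
  have hμlb : ∀ i, t ≤ μ i := fun i => hμdec i (Fin.last k) (Fin.le_last i)
  have hμub : ∀ i, μ i ≤ t + q := fun i => le_trans (hμdec 0 i (Fin.zero_le i)) hμwin
  have hνlb : ∀ i, t ≤ ν i := fun i => htu.le.trans (hνdec i (Fin.last k) (Fin.le_last i))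
  have hνub : ∀ i, ν i ≤ t + q := fun i =>
    le_trans (hνdec 0 i (Fin.zero_le i)) (by rw [htu]; exact hνwin)
  -- abbreviation for counts
  have hval : ∀ (f : Fin (k+1) → ℕ), (∀ i, t ≤ f i) → (∀ i, f i ≤ t + q) →
      (∀ i, f i % q = t % q → f i = t ∨ f i = t + q) := by
    intro f hlb hub i hi
    rcases Nat.lt_or_ge t (f i) with h | h
    · right
      have := mod_step hq hi h
      have := hub i
      omega
    · left; have := hlb i; omega
  -- middle counts
  have hmid : ∀ f : Fin (k+1) → ℕ, (∀ i, t ≤ f i) → (∀ i, f i ≤ t + q) →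
      ∀ w, t < w → w < t + q →
      (Finset.univ.filter (fun i => f i = w)) = (Finset.univ.filter (fun i => f i % q = w % q)) := by
    intro f hlb hub w hw1 hw2
    ext i
    simp only [Finset.mem_filter, Finset.mem_univ, true_and]
    constructor
    · intro h; rw [h]
    · intro h
      rcases lt_trichotomy (f i) w with hc | hc | hc
      · exfalso; have := mod_step hq (h.symm) hc; have := hlb i; omega
      · exact hc
      · exfalso; have := mod_step hq h hc; have := hub i; omega
  have hmidc : ∀ w, t < w → w < t + q →
      (Finset.univ.filter (fun i => μ i = w)).card = (Finset.univ.filter (fun i => ν i = w)).card := by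
    intro w hw1 hw2
    rw [hmid μ hμlb hμub w hw1 hw2, hmid ν hνlb hνub w hw1 hw2,
      hμres _ (Nat.mod_lt _ hq), hνres _ (Nat.mod_lt _ hq)]
  -- split at t and t + q
  have hsplit : ∀ f : Fin (k+1) → ℕ, (∀ i, t ≤ f i) → (∀ i, f i ≤ t + q) →
      (Finset.univ.filter (fun i => f i % q = t % q)).card =
      (Finset.univ.filter (fun i => f i = t)).card +
      (Finset.univ.filter (fun i => f i = t + q)).card := by
    intro f hlb hub
    have hun : (Finset.univ.filter (fun i => f i % q = t % q)) =
        (Finset.univ.filter (fun i => f i = t)) ∪ (Finset.univ.filter (fun i => f i = t + q)) := by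
      ext i
      simp only [Finset.mem_filter, Finset.mem_univ, true_and, Finset.mem_union]
      constructor
      · intro h; exact hval f hlb hub i h
      · rintro (h | h) <;> rw [h]
        exact Nat.add_mod_right t q
    rw [hun]
    apply Finset.card_union_of_disjoint
    rw [Finset.disjoint_left]
    intro i hi1 hi2
    simp only [Finset.mem_filter, Finset.mem_univ, true_and] at hi1 hi2
    omega
  -- Icc sum decomposition
  have hIcc : Finset.Icc t (t + q) = insert t (insert (t + q) (Finset.Ioo t (t + q))) := by
    ext w
    simp only [Finset.mem_Icc, Finset.mem_insert, Finset.mem_Ioo]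
    omega
  have hsumdec : ∀ f : Fin (k+1) → ℕ, (∀ i, t ≤ f i) → (∀ i, f i ≤ t + q) → (∑ i, f i = d) →
      (Finset.univ.filter (fun i => f i = t)).card * t +
      ((Finset.univ.filter (fun i => f i = t + q)).card * (t + q) +
       (∑ w ∈ Finset.Ioo t (t + q), (Finset.univ.filter (fun i => f i = w)).card * w)) = d := by
    intro f hlb hub hsum
    have hmaps : ∀ x ∈ Finset.univ, f x ∈ Finset.Icc t (t + q) := by
      intro x _; exact Finset.mem_Icc.mpr ⟨hlb x, hub x⟩
    have hfib := Finset.sum_fiberwise_of_maps_to hmaps f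
    have hinner : ∀ w, (∑ i ∈ Finset.univ.filter (fun i => f i = w), f i) =
        (Finset.univ.filter (fun i => f i = w)).card * w := by
      intro w
      rw [Finset.sum_congr rfl (fun i hi => by
        simp only [Finset.mem_filter] at hi; exact hi.2), Finset.sum_const, smul_eq_mul]
    rw [hsum] at hfib
    rw [← hfib, hIcc, Finset.sum_insert, Finset.sum_insert]
    · rw [hinner t, hinner (t+q)]
      congr 1
      congr 1
      exact Finset.sum_congr rfl fun w _ => (hinner w).symm
    · simp only [Finset.mem_Ioo]; omega
    · simp only [Finset.mem_insert, Finset.mem_Ioo]; omega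
  -- endpoint counts
  have hSmid : (∑ w ∈ Finset.Ioo t (t + q), (Finset.univ.filter (fun i => μ i = w)).card * w) =
      (∑ w ∈ Finset.Ioo t (t + q), (Finset.univ.filter (fun i => ν i = w)).card * w) := by
    apply Finset.sum_congr rfl
    intro w hw
    simp only [Finset.mem_Ioo] at hw
    rw [hmidc w hw.1 hw.2]
  set x1 := (Finset.univ.filter (fun i => μ i = t)).card with hx1
  set x2 := (Finset.univ.filter (fun i => μ i = t + q)).card with hx2
  set y1 := (Finset.univ.filter (fun i => ν i = t)).card with hy1
  set y2 := (Finset.univ.filter (fun i => ν i = t + q)).card with hy2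
  have e1 : x1 + x2 = y1 + y2 := by
    have h1 := hsplit μ hμlb hμub
    have h2 := hsplit ν hνlb hνub
    rw [hμres _ (Nat.mod_lt _ hq)] at h1
    rw [hνres _ (Nat.mod_lt _ hq)] at h2
    omega
  have e2 : x1 * t + (x2 * (t + q) + (∑ w ∈ Finset.Ioo t (t + q),
        (Finset.univ.filter (fun i => μ i = w)).card * w)) =
      y1 * t + (y2 * (t + q) + (∑ w ∈ Finset.Ioo t (t + q),
        (Finset.univ.filter (fun i => μ i = w)).card * w)) := by
    rw [hsumdec μ hμlb hμub hμsum]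
    rw [hSmid, hsumdec ν hνlb hνub hνsum]
  have h2t : x1 * t + x2 * t = y1 * t + y2 * t := by
    calc x1 * t + x2 * t = (x1 + x2) * t := (add_mul _ _ _).symm
      _ = (y1 + y2) * t := by rw [e1]
      _ = y1 * t + y2 * t := add_mul _ _ _
  have e2' : x1 * t + x2 * t + x2 * q = y1 * t + y2 * t + y2 * q := by
    have hx : x2 * (t + q) = x2 * t + x2 * q := mul_add _ _ _
    have hy : y2 * (t + q) = y2 * t + y2 * q := mul_add _ _ _
    omega
  have hq2 : x2 * q = y2 * q := by omega
  have hxy2 : x2 = y2 := Nat.eq_of_mul_eq_mul_right hq hq2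
  have hxy1 : x1 = y1 := by omega
  -- all counts equal
  have hcall : ∀ w, (Finset.univ.filter (fun i => μ i = w)).card =
      (Finset.univ.filter (fun i => ν i = w)).card := by
    intro w
    by_cases hwt : w = t
    · rw [hwt]; exact hxy1
    by_cases hwtq : w = t + q
    · rw [hwtq]; exact hxy2
    by_cases hwin : t < w ∧ w < t + q
    · exact hmidc w hwin.1 hwin.2
    · have hout : w < t ∨ t + q < w := by omega
      have hz : ∀ f : Fin (k+1) → ℕ, (∀ i, t ≤ f i) → (∀ i, f i ≤ t + q) →
          (Finset.univ.filter (fun i => f i = w)) = ∅ := by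
        intro f hlb hub
        apply Finset.filter_eq_empty_iff.mpr
        intro i _
        have := hlb i; have := hub i
        omega
      rw [hz μ hμlb hμub, hz ν hνlb hνub]
  -- tails equal
  have H : ∀ v, (Finset.univ.filter (fun i => v ≤ μ i)).card =
      (Finset.univ.filter (fun i => v ≤ ν i)).card := by
    intro v
    have hcard : ∀ f : Fin (k+1) → ℕ, (∀ i, t ≤ f i) → (∀ i, f i ≤ t + q) →
        (Finset.univ.filter (fun i => v ≤ f i)).card =
        ∑ w ∈ (Finset.Icc t (t + q)).filter (fun w => v ≤ w),
          (Finset.univ.filter (fun i => f i = w)).card := by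
      intro f hlb hub
      have hmaps : ∀ x ∈ Finset.univ.filter (fun i => v ≤ f i),
          f x ∈ (Finset.Icc t (t + q)).filter (fun w => v ≤ w) := by
        intro x hx
        simp only [Finset.mem_filter, Finset.mem_univ, true_and, Finset.mem_Icc] at hx ⊢
        exact ⟨⟨hlb x, hub x⟩, hx⟩
      rw [Finset.card_eq_sum_card_fiberwise hmaps]
      apply Finset.sum_congr rfl
      intro w hw
      simp only [Finset.mem_filter, Finset.mem_Icc] at hw
      congr 1
      ext i
      simp only [Finset.mem_filter, Finset.mem_univ, true_and]
      constructor
      · exact fun h => h.2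
      · intro h; exact ⟨by omega, h⟩
    rw [hcard μ hμlb hμub, hcard ν hνlb hνub]
    exact Finset.sum_congr rfl (fun w _ => hcall w)
  -- conclude via lower-set lemma
  have hmem : ∀ (f : Fin (k+1) → ℕ), (∀ i j : Fin (k+1), i ≤ j → f j ≤ f i) →
      ∀ v (j : Fin (k+1)), v ≤ f j ↔ (j : ℕ) < (Finset.univ.filter (fun i => v ≤ f i)).card := by
    intro f hdec v j
    have := lower_mem_iff (Finset.univ.filter (fun i => v ≤ f i)) (by
      intro i j hij hj
      simp only [Finset.mem_filter, Finset.mem_univ, true_and] at hj ⊢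
      exact le_trans hj (hdec i j hij)) j
    simpa using this
  funext i
  apply le_antisymm
  · have h1 : (i : ℕ) < (Finset.univ.filter (fun j => μ i ≤ μ j)).card :=
      (hmem μ hμdec (μ i) i).mp (le_refl _)
    rw [H] at h1
    exact (hmem ν hνdec (μ i) i).mpr h1
  · have h1 : (i : ℕ) < (Finset.univ.filter (fun j => ν i ≤ ν j)).card :=
      (hmem ν hνdec (ν i) i).mp (le_refl _)
    rw [← H] at h1
    exact (hmem μ hμdec (ν i) i).mpr h1
end
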